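/- arXiv:1911.00647 — 7 statements merged into one kernel-verified Lean document; each statement's English description precedes it below -/
import Mathlib

section
/- Let f, g ∈ Homeo₊(ℝ) with α < β real numbers such that Fix(f) ∩ [α,β] = {α,β} and such that f and g are not crossed. If g(α) > α or g(β) < β, then g((α,β)) ∩ (α,β) = ∅. -/
open Set MeasureTheory
open scoped NNReal

/-- Orientation-preserving homeomorphisms of ℝ, modelled as order-isomorphisms of ℝ
(every order-isomorphism of ℝ is a strictly increasing homeomorphism and conversely). -/
abbrev HomeoR := ℝ ≃o ℝ

/-- The fixed point set of `f`. -/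
def FixSet (f : HomeoR) : Set ℝ := {x : ℝ | f x = x}

/-- `f` and `g` are crossed with `f` in the distinguished role: there is an interval
`(a,b)` with endpoints possibly `±∞` such that `Fix(f) ∩ [a,b] = {a,b}` while `g`
maps `a` or `b` into `(a,b)`. -/
def CrossedAt (f g : HomeoR) : Prop :=
  ∃ a b : EReal, a < b ∧
    ({x : ℝ | a ≤ (x : EReal) ∧ (x : EReal) ≤ b} ∩ FixSet f
      = {x : ℝ | (x : EReal) = a ∨ (x : EReal) = b}) ∧
    (∃ x : ℝ, ((x : EReal) = a ∨ (x : EReal) = b) ∧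
      a < (g x : EReal) ∧ (g x : EReal) < b)

/-- Two elements are crossed. -/
def Crossed (f g : HomeoR) : Prop := CrossedAt f g ∨ CrossedAt g f

/-- `μ` is a (nonzero) `G`-invariant Radon measure on ℝ. -/
def InvariantRadon (G : Subgroup HomeoR) (μ : Measure ℝ) : Prop :=
  μ ≠ 0 ∧ IsFiniteMeasureOnCompacts μ ∧ ∀ g ∈ G, Measure.map (⇑g) μ = μ

/-- `Λ` is a nonempty minimal closed `G`-invariant subset of ℝ. -/
def MinimalSet (G : Subgroup HomeoR) (Λ : Set ℝ) : Prop :=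
  Λ.Nonempty ∧ IsClosed Λ ∧ (∀ g ∈ G, ⇑g '' Λ = Λ) ∧
    ∀ Λ' ⊆ Λ, Λ'.Nonempty → IsClosed Λ' → (∀ g ∈ G, ⇑g '' Λ' = Λ') → Λ' = Λ

theorem not_crossed_disjoint (f g : HomeoR) (α β : ℝ) (hαβ : α < β)
    (hfix : FixSet f ∩ Icc α β = {α, β})
    (hnc : ¬ Crossed f g)
    (h : α < g α ∨ g β < β) :
    (⇑g '' Ioo α β) ∩ Ioo α β = ∅ := by
  have hfix' : {x : ℝ | (α : EReal) ≤ (x : EReal) ∧ (x : EReal) ≤ (β : EReal)} ∩ FixSet f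
      = {x : ℝ | (x : EReal) = (α : EReal) ∨ (x : EReal) = (β : EReal)} := by
    have h1 : {x : ℝ | (α : EReal) ≤ (x : EReal) ∧ (x : EReal) ≤ (β : EReal)} = Icc α β := by
      ext x
      simp [Set.mem_Icc, EReal.coe_le_coe_iff]
    have h2 : {x : ℝ | (x : EReal) = (α : EReal) ∨ (x : EReal) = (β : EReal)}
        = ({α, β} : Set ℝ) := by
      ext x
      simp [EReal.coe_eq_coe_iff]
    rw [h1, h2, Set.inter_comm]
    exact hfix
  have hkey : ¬ ∃ x : ℝ, ((x : EReal) = (α : EReal) ∨ (x : EReal) = (β : EReal)) ∧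
      (α : EReal) < (g x : EReal) ∧ (g x : EReal) < (β : EReal) := by
    intro hx
    exact hnc (Or.inl ⟨α, β, by exact_mod_cast hαβ, hfix', hx⟩)
  have hgα : g α ∉ Ioo α β := fun hm =>
    hkey ⟨α, Or.inl rfl, by exact_mod_cast hm.1, by exact_mod_cast hm.2⟩
  have hgβ : g β ∉ Ioo α β := fun hm =>
    hkey ⟨β, Or.inr rfl, by exact_mod_cast hm.1, by exact_mod_cast hm.2⟩
  ext y
  simp only [mem_inter_iff, mem_image, mem_empty_iff_false, iff_false, not_and]
  rintro ⟨x, hx, rfl⟩ hy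
  rcases h with h | h
  · have hβα : β ≤ g α := by
      by_contra hlt
      push_neg at hlt
      exact hgα ⟨h, hlt⟩
    have : g α < g x := g.strictMono hx.1
    exact absurd hy.2 (not_lt.2 (hβα.trans this.le))
  · have hβα : g β ≤ α := by
      by_contra hlt
      push_neg at hlt
      exact hgβ ⟨hlt, h⟩
    have : g x < g β := g.strictMono hx.2
    exact absurd hy.1 (not_lt.2 (this.le.trans hβα))
end

section
/- Let F be a subset of Homeo₊(ℝ) and let H = ⟨F⟩ be the subgroup generated by F. Suppose H contains no crossed pair of elements. If every element of F has a nonempty fixed point set, then every element of H has a nonempty fixed point set. -/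
open Set MeasureTheory
open scoped NNReal

lemma fixSet_closed (f : HomeoR) : IsClosed (FixSet f) :=
  isClosed_eq f.continuous continuous_id

lemma gt_of_fix (f g : HomeoR) (hpos : ∀ x, x < f (g x)) {a : ℝ} (ha : f a = a) :
    a < g a := by
  by_contra h
  push_neg at h
  have h2 : f (g a) ≤ f a := f.monotone h
  rw [ha] at h2
  exact absurd (hpos a) (not_lt.mpr h2)

lemma swap_pos (f g : HomeoR) (hpos : ∀ x, x < f (g x)) : ∀ x, x < g (f x) := by
  intro x
  by_contra h
  push_neg at h
  have h2 : f (g (f x)) ≤ f x := f.monotone h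
  exact absurd (hpos (f x)) (not_lt.mpr h2)

lemma crossedAt_aux (f g : HomeoR) (hpos : ∀ x, x < f (g x)) (p q : ℝ)
    (hp : f p = p) (hq : g q = q) (hpq : p < q) : CrossedAt f g := by
  have hfq : q < f q := by have := hpos q; rwa [hq] at this
  have hqnf : f q ≠ q := by linarith
  set S1 : Set ℝ := FixSet f ∩ Iic q with hS1
  have hS1c : IsClosed S1 := (fixSet_closed f).inter isClosed_Iic
  have hS1n : S1.Nonempty := ⟨p, hp, le_of_lt hpq⟩
  have hS1b : BddAbove S1 := ⟨q, fun x hx => hx.2⟩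
  set A := sSup S1 with hA
  have hAmem : A ∈ S1 := hS1c.csSup_mem hS1n hS1b
  have hAfix : f A = A := hAmem.1
  have hAq : A < q := lt_of_le_of_ne hAmem.2 (fun h => hqnf (by rw [← h]; exact hAfix))
  have hgA : A < g A := gt_of_fix f g hpos hAfix
  have hgAq : g A < q := by
    have := g.strictMono hAq
    rwa [hq] at this
  set S2 : Set ℝ := FixSet f ∩ Ici q with hS2
  rcases S2.eq_empty_or_nonempty with hS2e | hS2n
  · refine ⟨(A : EReal), ⊤, EReal.coe_lt_top A, ?_, ⟨A, Or.inl rfl, ?_, EReal.coe_lt_top _⟩⟩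
    · ext x
      simp only [mem_inter_iff, mem_setOf_eq, le_top, and_true, EReal.coe_le_coe_iff,
        EReal.coe_eq_coe_iff, EReal.coe_ne_top, or_false]
      constructor
      · rintro ⟨hxA, hxf⟩
        rcases le_total x q with h | h
        · exact le_antisymm (le_csSup hS1b ⟨hxf, h⟩) hxA
        · exact absurd (show x ∈ S2 from ⟨hxf, h⟩) (by rw [hS2e]; exact notMem_empty x)
      · rintro rfl
        exact ⟨le_refl _, hAfix⟩
    · exact EReal.coe_lt_coe_iff.mpr hgA
  · set B := sInf S2 with hB
    have hS2b : BddBelow S2 := ⟨q, fun x hx => hx.2⟩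
    have hBmem : B ∈ S2 := ((fixSet_closed f).inter isClosed_Ici).csInf_mem hS2n hS2b
    have hBfix : f B = B := hBmem.1
    have hqB : q < B := lt_of_le_of_ne hBmem.2 (fun h => hqnf (by rw [h]; exact hBfix))
    refine ⟨(A : EReal), (B : EReal), EReal.coe_lt_coe_iff.mpr (hAq.trans hqB), ?_,
      ⟨A, Or.inl rfl, EReal.coe_lt_coe_iff.mpr hgA, EReal.coe_lt_coe_iff.mpr (hgAq.trans hqB)⟩⟩
    ext x
    simp only [mem_inter_iff, mem_setOf_eq, EReal.coe_le_coe_iff, EReal.coe_eq_coe_iff]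
    constructor
    · rintro ⟨⟨hxA, hxB⟩, hxf⟩
      rcases le_total x q with h | h
      · exact Or.inl (le_antisymm (le_csSup hS1b ⟨hxf, h⟩) hxA)
      · exact Or.inr (le_antisymm hxB (csInf_le hS2b ⟨hxf, h⟩))
    · rintro (rfl | rfl)
      · exact ⟨⟨le_refl _, le_of_lt (hAq.trans hqB)⟩, hAfix⟩
      · exact ⟨⟨le_of_lt (hAq.trans hqB), le_refl _⟩, hBfix⟩

lemma crossed_of_pos (f g : HomeoR) (hpos : ∀ x, x < f (g x))
    (hf : (FixSet f).Nonempty) (hg : (FixSet g).Nonempty) : Crossed f g := by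
  obtain ⟨p, hp⟩ := hf
  obtain ⟨q, hq⟩ := hg
  rcases lt_trichotomy p q with h | h | h
  · exact Or.inl (crossedAt_aux f g hpos p q hp hq h)
  · exfalso
    subst h
    have := hpos p
    rw [hq, hp] at this
    exact lt_irrefl _ this
  · exact Or.inr (crossedAt_aux g f (swap_pos f g hpos) q p hq hp h)

lemma inv_fix (x : HomeoR) {p : ℝ} (hp : x p = p) : x⁻¹ p = p :=
  x.symm_apply_eq.mpr hp.symm

theorem generated_fix (F : Set HomeoR)
    (hnc : ∀ f ∈ Subgroup.closure F, ∀ g ∈ Subgroup.closure F, ¬ Crossed f g)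
    (hF : ∀ f ∈ F, (FixSet f).Nonempty) :
    ∀ g ∈ Subgroup.closure F, (FixSet g).Nonempty := by
  intro g hg
  refine Subgroup.closure_induction (p := fun x _ => (FixSet x).Nonempty)
    (fun x hx => hF x hx) ⟨0, rfl⟩ ?_ ?_ hg
  · -- mul
    intro x y hx hy hfx hfy
    by_contra hnofix
    have hne : ∀ z : ℝ, x (y z) ≠ z := by
      intro z hz
      exact hnofix ⟨z, hz⟩
    have hcont : Continuous fun z : ℝ => x (y z) - z :=
      (x.continuous.comp y.continuous).sub continuous_id
    have hsign : (∀ z, z < x (y z)) ∨ (∀ z, x (y z) < z) := by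
      rcases lt_or_gt_of_ne (sub_ne_zero.mpr (hne 0)) with h0 | h0
      · right
        intro z
        by_contra hc
        push_neg at hc
        have hz : (0:ℝ) < x (y z) - z := sub_pos.mpr (lt_of_le_of_ne hc (Ne.symm (hne z)))
        have : (0:ℝ) ∈ uIcc (x (y 0) - 0) (x (y z) - z) :=
          mem_uIcc.mpr (Or.inl ⟨le_of_lt h0, le_of_lt hz⟩)
        obtain ⟨w, _, hw⟩ := intermediate_value_uIcc hcont.continuousOn this
        exact hne w (by linarith [sub_eq_zero.mp hw])
      · left
        intro z
        by_contra hc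
        push_neg at hc
        have hz : x (y z) - z < 0 := sub_neg.mpr (lt_of_le_of_ne hc (hne z))
        have : (0:ℝ) ∈ uIcc (x (y 0) - 0) (x (y z) - z) :=
          mem_uIcc.mpr (Or.inr ⟨le_of_lt hz, le_of_lt h0⟩)
        obtain ⟨w, _, hw⟩ := intermediate_value_uIcc hcont.continuousOn this
        exact hne w (by linarith [sub_eq_zero.mp hw])
    rcases hsign with hpos | hneg
    · exact hnc x hx y hy (crossed_of_pos x y hpos hfx hfy)
    · have hpos' : ∀ z, z < y⁻¹ (x⁻¹ z) := by
        intro z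
        have := hneg (y⁻¹ (x⁻¹ z))
        have hxy : x (y (y⁻¹ (x⁻¹ z))) = z := by
          simp
        rwa [hxy] at this
      have hfx' : (FixSet x⁻¹).Nonempty := by
        obtain ⟨p, hp⟩ := hfx
        exact ⟨p, inv_fix x hp⟩
      have hfy' : (FixSet y⁻¹).Nonempty := by
        obtain ⟨p, hp⟩ := hfy
        exact ⟨p, inv_fix y hp⟩
      exact hnc y⁻¹ (inv_mem hy) x⁻¹ (inv_mem hx)
        (crossed_of_pos y⁻¹ x⁻¹ hpos' hfy' hfx')
  · intro x _ hfx
    obtain ⟨p, hp⟩ := hfx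
    exact ⟨p, inv_fix x hp⟩
end

section
/- Every group acting freely by homeomorphisms on the real line is isomorphic to a subgroup of (ℝ, +). In particular, such a group is abelian and torsion-free. -/
open Set MeasureTheory
open scoped NNReal

/-!
Order `G` by the orbit of `0`. Each `g` acts by a continuous injective map without fixed
points, hence increasingly, so the order is left invariant. By freeness and the intermediate
value theorem, `g • x < h • x` at one point forces it at every point, so the order is also
right invariant. It is archimedean because a bounded increasing orbit `gⁿ • x` would converge
to a fixed point of `g`.

Hölder's argument makes such a group abelian: either a least positive element `c` exists, and
then every element is a power of `c`; or every positive element dominates the square of a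
positive element `δ`, and comparing `a`, `b` with powers of `δ` shows `a * b < δ² * (b * a)`,
which rules out `b * a < a * b`. Finally, an archimedean linearly ordered abelian group embeds
in `ℝ`.
-/

section BiorderedGroup

variable {G : Type*} [Group G] [LinearOrder G] [MulLeftMono G]

theorem zpow_strictMono_of_one_lt {a : G} (ha : 1 < a) : StrictMono fun n : ℤ => a ^ n :=
  strictMono_int_of_lt_succ fun n => by
    rw [zpow_add_one]
    exact lt_mul_of_one_lt_right' _ ha

variable [MulRightMono G]

theorem exists_mul_self_le_of_forall_not_isLeast (hG : ∀ c : G, ¬IsLeast {g : G | 1 < g} c)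
    {ε : G} (hε : 1 < ε) : ∃ δ : G, 1 < δ ∧ δ * δ ≤ ε := by
  obtain ⟨γ, hγ, hγε⟩ : ∃ γ : G, 1 < γ ∧ γ < ε := by
    simpa [IsLeast, lowerBounds, hε] using hG ε
  rcases le_or_gt (γ * γ) ε with hγγ | hεγ
  · exact ⟨γ, hγ, hγγ⟩
  · refine ⟨ε / γ, one_lt_div'.2 hγε, ?_⟩
    calc ε / γ * (ε / γ) ≤ ε / γ * γ := mul_le_mul_right (div_lt_iff_lt_mul.2 hεγ).le _
      _ = ε := div_mul_cancel ε γ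

variable (harch : ∀ (x : G) {y : G}, 1 < y → ∃ n : ℕ, x ≤ y ^ n)
include harch

theorem exists_zpow_le_lt_zpow_succ {a : G} (ha : 1 < a) (x : G) :
    ∃ m : ℤ, a ^ m ≤ x ∧ x < a ^ (m + 1) := by
  obtain ⟨k, hk⟩ := harch x⁻¹ ha
  obtain ⟨n, hn⟩ := harch x ha
  obtain ⟨m, hm, hmax⟩ := Int.exists_greatest_of_bdd (P := fun m : ℤ => a ^ m ≤ x)
    ⟨n, fun z hz => (zpow_strictMono_of_one_lt ha).le_iff_le.1 (by simpa using hz.trans hn)⟩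
    ⟨-k, by simpa using inv_le_of_inv_le' hk⟩
  exact ⟨m, hm, lt_of_not_ge fun h => by linarith [hmax _ h]⟩

theorem exists_eq_zpow_of_isLeast {c : G} (hc : IsLeast {g : G | 1 < g} c) (x : G) :
    ∃ m : ℤ, x = c ^ m := by
  obtain ⟨m, hm, hm'⟩ := exists_zpow_le_lt_zpow_succ harch hc.1 x
  refine ⟨m, by_contra fun hne => ?_⟩
  have hpos : 1 < x / c ^ m := one_lt_div'.2 (lt_of_le_of_ne hm (Ne.symm hne))
  have hlt : x / c ^ m < c := div_lt_iff_lt_mul.2 (by rwa [← zpow_one_add, add_comm])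
  exact (hc.2 hpos).not_gt hlt

theorem mul_lt_sq_mul_mul_swap {δ : G} (hδ : 1 < δ) (a b : G) : a * b < δ ^ 2 * (b * a) := by
  obtain ⟨m, ham, ham'⟩ := exists_zpow_le_lt_zpow_succ harch hδ a
  obtain ⟨n, hbn, hbn'⟩ := exists_zpow_le_lt_zpow_succ harch hδ b
  calc a * b < δ ^ (m + 1) * δ ^ (n + 1) := mul_lt_mul_of_lt_of_lt ham' hbn'
    _ = δ ^ 2 * (δ ^ n * δ ^ m) := by group
    _ ≤ δ ^ 2 * (b * a) := mul_le_mul_right (mul_le_mul' hbn ham) _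

theorem mul_comm_of_archimedean (a b : G) : a * b = b * a := by
  by_cases hcyc : ∃ c : G, IsLeast {g : G | 1 < g} c
  · obtain ⟨c, hc⟩ := hcyc
    obtain ⟨i, rfl⟩ := exists_eq_zpow_of_isLeast harch hc a
    obtain ⟨j, rfl⟩ := exists_eq_zpow_of_isLeast harch hc b
    exact (Commute.zpow_zpow_self c i j).eq
  · push Not at hcyc
    have hle : ∀ a b : G, a * b ≤ b * a := fun a b => by
      by_contra! hlt
      obtain ⟨δ, hδ, hδδ⟩ := exists_mul_self_le_of_forall_not_isLeast hcyc (one_lt_div'.2 hlt)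
      rw [← sq] at hδδ
      exact (mul_lt_sq_mul_mul_swap harch hδ a b).not_ge (le_div_iff_mul_le.1 hδδ)
    exact le_antisymm (hle a b) (hle b a)

theorem exists_injective_monoidHom_multiplicative_real_of_archimedean :
    ∃ φ : G →* Multiplicative ℝ, Function.Injective φ := by
  let _ : CommGroup G := { mul_comm := mul_comm_of_archimedean harch }
  have : IsOrderedMonoid G :=
    ⟨fun _ _ hab c => mul_le_mul_left hab c, fun _ _ hab c => mul_le_mul_right hab c⟩
  have : MulArchimedean G := ⟨harch⟩
  obtain ⟨f, hf⟩ := Archimedean.exists_orderAddMonoidHom_real_injective (Additive G)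
  exact ⟨AddMonoidHom.toMultiplicativeRight f.toAddMonoidHom, hf⟩

end BiorderedGroup

section FreeAction

variable {G : Type*} [Group G] [MulAction G ℝ] (hfree : ∀ g : G, g ≠ 1 → ∀ x : ℝ, g • x ≠ x)
include hfree

theorem eq_of_smul_eq_smul {g h : G} {x : ℝ} (hx : g • x = h • x) : g = h := by
  by_contra hne
  refine hfree (h⁻¹ * g) (fun h1 => hne (inv_mul_eq_one.1 h1).symm) x ?_
  rw [mul_smul, hx, inv_smul_smul]

variable [ContinuousConstSMul G ℝ]

theorem smul_lt_smul_of_smul_lt_smul {g h : G} {x₀ : ℝ} (h₀ : g • x₀ < h • x₀) (x : ℝ) :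
    g • x < h • x := by
  by_contra hx
  have hcont : Continuous fun y : ℝ => h • y - g • y :=
    (continuous_const_smul h).sub (continuous_const_smul g)
  obtain ⟨y, hy⟩ :=
    intermediate_value_univ x x₀ hcont ⟨sub_nonpos.2 (not_lt.1 hx), (sub_pos.2 h₀).le⟩
  obtain rfl := eq_of_smul_eq_smul hfree (sub_eq_zero.1 hy)
  exact h₀.false

theorem smul_le_smul_of_smul_le_smul {g h : G} {x₀ : ℝ} (h₀ : g • x₀ ≤ h • x₀) (x : ℝ) :
    g • x ≤ h • x := by
  rcases h₀.eq_or_lt with heq | hlt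
  · rw [eq_of_smul_eq_smul hfree heq]
  · exact (smul_lt_smul_of_smul_lt_smul hfree hlt x).le

theorem lt_smul_of_lt_smul {g : G} {x₀ : ℝ} (h₀ : x₀ < g • x₀) (x : ℝ) : x < g • x := by
  simpa using smul_lt_smul_of_smul_lt_smul hfree (g := 1) (by simpa using h₀) x

theorem smul_lt_of_smul_lt {g : G} {x₀ : ℝ} (h₀ : g • x₀ < x₀) (x : ℝ) : g • x < x := by
  simpa using smul_lt_smul_of_smul_lt_smul hfree (h := 1) (by simpa using h₀) x

theorem strictMono_smul (g : G) : StrictMono (g • · : ℝ → ℝ) := by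
  refine ((continuous_const_smul g).strictMono_of_inj (MulAction.injective g)).resolve_right
    fun hanti => ?_
  obtain rfl | hg := eq_or_ne g 1
  · exact absurd (hanti (zero_lt_one' ℝ)) (by simp)
  rcases (hfree g hg 0).lt_or_gt with hlt | hgt
  · exact (hanti hlt).not_gt (smul_lt_of_smul_lt hfree hlt _)
  · exact (hanti hgt).not_gt (lt_smul_of_lt_smul hfree hgt _)

theorem exists_le_pow_smul {g : G} {x : ℝ} (hx : x < g • x) (y : ℝ) :
    ∃ n : ℕ, y ≤ g ^ n • x := by
  by_contra! hbdd
  have hmono : Monotone fun n : ℕ => g ^ n • x := monotone_nat_of_le_succ fun n => by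
    rw [pow_succ', mul_smul]
    exact (lt_smul_of_lt_smul hfree hx _).le
  have hlim := tendsto_atTop_ciSup hmono ⟨y, by rintro _ ⟨n, rfl⟩; exact (hbdd n).le⟩
  have hfix := isFixedPt_of_tendsto_iterate (f := (g • ·)) (x := x)
    (by simpa only [smul_iterate_apply] using hlim)
    (continuous_const_smul g).continuousAt
  exact (lt_smul_of_lt_smul hfree hx _).ne' hfix

end FreeAction

/-- Hölder's theorem: a group acting freely on ℝ by homeomorphisms embeds in `(ℝ, +)`
(written multiplicatively as `Multiplicative ℝ`); in particular it is abelian and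
torsion-free. -/
theorem holder_embedding (G : Type*) [Group G] [MulAction G ℝ]
    (hcont : ∀ g : G, Continuous (fun x : ℝ => g • x))
    (hfree : ∀ g : G, g ≠ 1 → ∀ x : ℝ, g • x ≠ x) :
    ∃ φ : G →* Multiplicative ℝ, Function.Injective φ := by
  have : ContinuousConstSMul G ℝ := ⟨hcont⟩
  let _ : LinearOrder G :=
    LinearOrder.lift' (· • (0 : ℝ)) fun _ _ => eq_of_smul_eq_smul hfree
  have : MulLeftMono G := ⟨fun c {a b} (hab : a • (0 : ℝ) ≤ b • 0) =>
    show (c * a) • (0 : ℝ) ≤ (c * b) • 0 by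
      simpa only [mul_smul] using (strictMono_smul hfree c).monotone hab⟩
  have : MulRightMono G := ⟨fun c {a b} (hab : a • (0 : ℝ) ≤ b • 0) =>
    show (a * c) • (0 : ℝ) ≤ (b * c) • 0 by
      simpa only [mul_smul] using smul_le_smul_of_smul_le_smul hfree hab (c • 0)⟩
  refine exists_injective_monoidHom_multiplicative_real_of_archimedean fun x y hy => ?_
  have hy0 : (1 : G) • (0 : ℝ) < y • 0 := hy
  exact exists_le_pow_smul hfree (by simpa using hy0) (x • 0)
end

section
/- Let G be a subgroup of Homeo₊(ℝ) without crossed elements. Suppose there exists an infinite tower {(Iᵢ, fᵢ)} for G, i.e., a strictly increasing sequence of closed bounded intervals I₁ ⊊ I₂ ⊊ ⋯ and elements fᵢ ∈ G with Fix(fᵢ) ∩ Iᵢ equal to the set of endpoints of Iᵢ, such that ⋃ᵢ Iᵢ = ℝ. Then G admits no invariant Radon measure on ℝ. -/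
open Set MeasureTheory
open scoped NNReal

/-!
If `g` fixes `a` and `b` but no point of `(a, b)`, then for `x ∈ (a, b)` the two-sided orbit
`gⁿ x` is strictly monotone and its supremum and infimum are fixed points, hence equal `b` and `a`.
So `(a, b)` is the disjoint union of the translates `gⁿ [x, g x)`, `n ∈ ℤ`, which all have the same
`μ`-measure; as `μ (a, b)` is finite, it is `0`. The open intervals of the tower still exhaust `ℝ`
because the closed ones are nested and cover `ℝ`, so `μ = 0`.
-/

namespace OrderIso

variable {α : Type*} [Preorder α] (g : α ≃o α)

theorem zpow_apply_eq_self {x : α} (hx : g x = x) (n : ℤ) : (g ^ n) x = x := by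
  induction n using Int.induction_on with
  | zero => rfl
  | succ k ih => rw [zpow_add_one, RelIso.mul_apply, hx, ih]
  | pred k ih =>
    rw [zpow_sub_one, RelIso.mul_apply, show g⁻¹ x = x from g.symm_apply_eq.2 hx.symm, ih]

theorem zpow_add_one_apply (n : ℤ) (x : α) : (g ^ (n + 1)) x = g ((g ^ n) x) := by
  rw [add_comm, zpow_one_add, RelIso.mul_apply]

theorem strictMono_zpow_apply {x : α} (hx : x < g x) : StrictMono fun n : ℤ => (g ^ n) x :=
  strictMono_int_of_lt_succ fun n => by
    simpa only [zpow_add_one, RelIso.mul_apply] using (g ^ n).strictMono hx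

theorem image_range_zpow_apply (x : α) :
    g '' range (fun n : ℤ => (g ^ n) x) = range fun n : ℤ => (g ^ n) x := by
  rw [← range_comp]
  simp only [Function.comp_def, ← zpow_add_one_apply]
  exact (Equiv.addRight (1 : ℤ)).surjective.range_comp fun n => (g ^ n) x

end OrderIso

theorem StrictMono.iUnion_Ico_add_one_eq_Ioo {β : Type*} [LinearOrder β] {u : ℤ → β} {a b : β}
    (hu : StrictMono u) (ha : IsGLB (range u) a) (hb : IsLUB (range u) b) :
    ⋃ n : ℤ, Ico (u n) (u (n + 1)) = Ioo a b := by
  ext z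
  simp only [mem_iUnion, mem_Ico, mem_Ioo]
  constructor
  · rintro ⟨n, hnz, hzn⟩
    exact ⟨(ha.1 (mem_range_self (n - 1))).trans_lt ((hu (sub_one_lt n)).trans_le hnz),
      hzn.trans_le (hb.1 (mem_range_self (n + 1)))⟩
  · rintro ⟨haz, hzb⟩
    obtain ⟨_, ⟨m, rfl⟩, hzm, -⟩ := hb.exists_between hzb
    obtain ⟨_, ⟨l, rfl⟩, -, hlz⟩ := ha.exists_between haz
    obtain ⟨k, hkz, hk⟩ := Int.exists_greatest_of_bdd (P := fun n => u n ≤ z)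
      ⟨m, fun n hn => (hu.lt_iff_lt.1 (hn.trans_lt hzm)).le⟩ ⟨l, hlz.le⟩
    exact ⟨k, hkz, not_le.1 fun h => (hk _ h).not_gt (lt_add_one k)⟩

namespace OrderIso

variable {α : Type*} [ConditionallyCompleteLinearOrder α] {g : α ≃o α} {a b x : α}

theorem isLUB_range_zpow_apply (hb : g b = b) (hfix : ∀ y ∈ Ioo a b, g y ≠ y)
    (hx : x ∈ Ioo a b) : IsLUB (range fun n : ℤ => (g ^ n) x) b := by
  set s := range fun n : ℤ => (g ^ n) x
  have hbs : b ∈ upperBounds s := by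
    rintro _ ⟨n, rfl⟩
    simpa only [zpow_apply_eq_self g hb] using ((g ^ n).strictMono hx.2).le
  have hne : s.Nonempty := range_nonempty _
  have hxs : x ≤ sSup s := le_csSup ⟨b, hbs⟩ ⟨0, by simp⟩
  have hfixed : g (sSup s) = sSup s := by rw [g.map_csSup' hne ⟨b, hbs⟩, image_range_zpow_apply]
  have hsup : sSup s = b :=
    (csSup_le hne hbs).eq_of_not_lt fun h => hfix _ ⟨hx.1.trans_le hxs, h⟩ hfixed
  exact hsup ▸ isLUB_csSup hne ⟨b, hbs⟩

theorem isGLB_range_zpow_apply (ha : g a = a) (hfix : ∀ y ∈ Ioo a b, g y ≠ y)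
    (hx : x ∈ Ioo a b) : IsGLB (range fun n : ℤ => (g ^ n) x) a := by
  set s := range fun n : ℤ => (g ^ n) x
  have has : a ∈ lowerBounds s := by
    rintro _ ⟨n, rfl⟩
    simpa only [zpow_apply_eq_self g ha] using ((g ^ n).strictMono hx.1).le
  have hne : s.Nonempty := range_nonempty _
  have hxs : sInf s ≤ x := csInf_le ⟨a, has⟩ ⟨0, by simp⟩
  have hfixed : g (sInf s) = sInf s := by rw [g.map_csInf' hne ⟨a, has⟩, image_range_zpow_apply]
  have hinf : sInf s = a :=
    ((le_csInf hne has).eq_of_not_lt fun h => hfix _ ⟨h, hxs.trans_lt hx.2⟩ hfixed).symm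
  exact hinf ▸ isGLB_csInf hne ⟨a, has⟩

end OrderIso

section InvariantMeasure

variable {α : Type*} [ConditionallyCompleteLinearOrder α] [TopologicalSpace α] [OrderTopology α]
  [MeasurableSpace α] [BorelSpace α] {μ : Measure α} {g : α ≃o α} {a b : α}

theorem measure_Ioo_eq_zero_of_lt_apply (hμ : ∀ h ∈ Subgroup.zpowers g, μ.map h = μ)
    (hfin : μ (Ioo a b) ≠ ⊤) (ha : g a = a) (hb : g b = b) (hfix : ∀ y ∈ Ioo a b, g y ≠ y)
    {x : α} (hx : x ∈ Ioo a b) (hgx : x < g x) : μ (Ioo a b) = 0 := by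
  set u : ℤ → α := fun n => (g ^ n) x
  have hu : StrictMono u := g.strictMono_zpow_apply hgx
  have hcover : ⋃ n, Ico (u n) (u (n + 1)) = Ioo a b :=
    hu.iUnion_Ico_add_one_eq_Ioo (OrderIso.isGLB_range_zpow_apply ha hfix hx)
      (OrderIso.isLUB_range_zpow_apply hb hfix hx)
  have hpiece (n : ℤ) : μ (Ico (u n) (u (n + 1))) = μ (Ico x (g x)) := by
    have hpre : ⇑(g ^ n) ⁻¹' Ico (u n) (u (n + 1)) = Ico x (g x) := by
      simp only [u, zpow_add_one, RelIso.mul_apply, OrderIso.preimage_Ico,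
        OrderIso.symm_apply_apply]
    rw [← hpre, ← Measure.map_apply (g ^ n).continuous.measurable measurableSet_Ico,
      hμ _ (Subgroup.zpow_mem_zpowers g n)]
  have hdisj : Pairwise (Function.onFun Disjoint fun n => Ico (u n) (u (n + 1))) := by
    simpa only [Order.succ_eq_add_one] using hu.monotone.pairwise_disjoint_on_Ico_succ
  have hsum : μ (Ioo a b) = ∑' _ : ℤ, μ (Ico x (g x)) := by
    rw [← hcover, measure_iUnion hdisj fun _ => measurableSet_Ico]
    exact tsum_congr hpiece
  have hfund : μ (Ico x (g x)) = 0 := by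
    by_contra h
    exact hfin (hsum.trans (ENNReal.tsum_const_eq_top_of_ne_zero h))
  rw [hsum, hfund, tsum_zero]

theorem measure_Ioo_eq_zero_of_forall_apply_ne (hμ : ∀ h ∈ Subgroup.zpowers g, μ.map h = μ)
    (hfin : μ (Ioo a b) ≠ ⊤) (ha : g a = a) (hb : g b = b) (hfix : ∀ y ∈ Ioo a b, g y ≠ y) :
    μ (Ioo a b) = 0 := by
  obtain hempty | ⟨x, hx⟩ := (Ioo a b).eq_empty_or_nonempty
  · rw [hempty, measure_empty]
  obtain hlt | hgt := (hfix x hx).lt_or_gt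
  · refine measure_Ioo_eq_zero_of_lt_apply (g := g⁻¹) (by rwa [Subgroup.zpowers_inv]) hfin
      (g.symm_apply_eq.2 ha.symm) (g.symm_apply_eq.2 hb.symm)
      (fun y hy h => hfix y hy (g.symm_apply_eq.1 h).symm) hx (g.lt_symm_apply.2 hlt)
  · exact measure_Ioo_eq_zero_of_lt_apply hμ hfin ha hb hfix hx hgt

end InvariantMeasure

theorem iUnion_Ioo_eq_univ_of_iUnion_Icc_eq_univ {ι α : Type*} [SemilatticeSup ι] [LinearOrder α]
    [NoMinOrder α] [NoMaxOrder α] {a b : ι → α} (ha : Antitone a) (hb : Monotone b)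
    (h : ⋃ i, Icc (a i) (b i) = univ) : ⋃ i, Ioo (a i) (b i) = univ := by
  refine eq_univ_of_forall fun z => ?_
  obtain ⟨z₁, hz₁⟩ := exists_lt z
  obtain ⟨z₂, hz₂⟩ := exists_gt z
  obtain ⟨i, hi⟩ := mem_iUnion.1 (h ▸ mem_univ z₁)
  obtain ⟨j, hj⟩ := mem_iUnion.1 (h ▸ mem_univ z₂)
  exact mem_iUnion.2 ⟨i ⊔ j, (ha le_sup_left).trans_lt (hi.1.trans_lt hz₁),
    hz₂.trans_le (hj.2.trans (hb le_sup_right))⟩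

theorem fixed_endpoints_of_fixSet_inter_Icc_eq {f : HomeoR} {a b : ℝ}
    (h : FixSet f ∩ Icc a b = {a, b}) :
    a ≤ b ∧ f a = a ∧ f b = b ∧ ∀ x ∈ Ioo a b, f x ≠ x := by
  have ha : a ∈ FixSet f ∩ Icc a b := h ▸ mem_insert a {b}
  have hb : b ∈ FixSet f ∩ Icc a b := h ▸ mem_insert_of_mem a rfl
  refine ⟨ha.2.2, ha.1, hb.1, fun x hx hfx => ?_⟩
  have hab : x ∈ ({a, b} : Set ℝ) := h ▸ ⟨hfx, Ioo_subset_Icc_self hx⟩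
  obtain rfl | rfl := hab
  exacts [lt_irrefl _ hx.1, lt_irrefl _ hx.2]

theorem tower_no_invariant_radon_general (G : Subgroup HomeoR)
    (a b : ℕ → ℝ) (f : ℕ → HomeoR)
    (hmem : ∀ i, f i ∈ G)
    (hnest : ∀ i, Icc (a i) (b i) ⊂ Icc (a (i+1)) (b (i+1)))
    (hfix : ∀ i, FixSet (f i) ∩ Icc (a i) (b i) = {a i, b i})
    (hcover : (⋃ i, Icc (a i) (b i)) = univ) :
    ¬ ∃ μ : Measure ℝ, InvariantRadon G μ := by
  rintro ⟨μ, hμ0, hμc, hμG⟩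
  have hends := fun i => fixed_endpoints_of_fixSet_inter_Icc_eq (hfix i)
  have hstep (i : ℕ) : a (i + 1) ≤ a i ∧ b i ≤ b (i + 1) :=
    (Icc_subset_Icc_iff (hends i).1).1 (hnest i).1
  have hnull (i : ℕ) : μ (Ioo (a i) (b i)) = 0 :=
    measure_Ioo_eq_zero_of_forall_apply_ne
      (fun h hh => hμG h (Subgroup.zpowers_le.2 (hmem i) hh)) measure_Ioo_lt_top.ne
      (hends i).2.1 (hends i).2.2.1 (hends i).2.2.2
  refine hμ0 (Measure.measure_univ_eq_zero.1 ?_)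
  rw [← iUnion_Ioo_eq_univ_of_iUnion_Icc_eq_univ (antitone_nat_of_succ_le fun i => (hstep i).1)
    (monotone_nat_of_le_succ fun i => (hstep i).2) hcover]
  exact measure_iUnion_null hnull

theorem tower_no_invariant_radon (G : Subgroup HomeoR)
    (hnc : ∀ f ∈ G, ∀ g ∈ G, ¬ Crossed f g)
    (a b : ℕ → ℝ) (f : ℕ → HomeoR)
    (hmem : ∀ i, f i ∈ G)
    (hab : ∀ i, a i < b i)
    (hnest : ∀ i, Icc (a i) (b i) ⊂ Icc (a (i+1)) (b (i+1)))
    (hfix : ∀ i, FixSet (f i) ∩ Icc (a i) (b i) = {a i, b i})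
    (hcover : (⋃ i, Icc (a i) (b i)) = univ) :
    ¬ ∃ μ : Measure ℝ, InvariantRadon G μ :=
  tower_no_invariant_radon_general G a b f hmem hnest hfix hcover
end

section
/- Let G be a subgroup of Homeo₊(ℝ) without crossed elements, and suppose G has a nonempty minimal closed invariant subset Λ ⊆ ℝ. Then there does not exist an infinite tower {(Iᵢ, fᵢ)} with fᵢ ∈ G such that ⋃ᵢ Iᵢ = ℝ. -/
open Set MeasureTheory
open scoped NNReal

/-- no interior fixed point + sign at one interior point ⇒ sign everywhere -/
lemma sign_const (f : HomeoR) (a b : ℝ)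
    (hnofix : ∀ y ∈ Ioo a b, f y ≠ y) (x : ℝ) (hx : x ∈ Ioo a b) (hfx : x < f x) :
    ∀ y ∈ Ioo a b, y < f y := by
  intro y hy
  by_contra hle
  push_neg at hle
  have hlt : f y < y := lt_of_le_of_ne hle (hnofix y hy)
  have hcont : Continuous (fun t => f t - t) := f.toHomeomorph.continuous.sub continuous_id
  have h0 : (0:ℝ) ∈ uIcc (f x - x) (f y - y) := by
    constructor <;> simp [inf_le_iff, le_sup_iff] <;> [right; left] <;> linarith
  have := intermediate_value_uIcc (f := fun t => f t - t) (a := x) (b := y)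
    (hcont.continuousOn)
  obtain ⟨z, hz, hz0⟩ := this h0
  have hzIoo : z ∈ Ioo a b := by
    rcases hz with ⟨h1, h2⟩
    constructor
    · calc a < min x y := lt_min hx.1 hy.1
        _ ≤ z := by simpa using h1
    · calc z ≤ max x y := by simpa using h2
        _ < b := max_lt hx.2 hy.2
  exact hnofix z hzIoo (by linarith [sub_eq_zero.mp hz0])

lemma endpoint_mem (Λ : Set ℝ) (hclosed : IsClosed Λ)
    (f : HomeoR) (hfΛ : ⇑f '' Λ = Λ)
    (a b x : ℝ) (hab : a < b)
    (hfix : FixSet f ∩ Icc a b = {a, b})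
    (hx : x ∈ Ioo a b) (hxΛ : x ∈ Λ) : a ∈ Λ ∨ b ∈ Λ := by
  have hmemfix : ∀ y, f y = y ∧ y ∈ Icc a b ↔ (y = a ∨ y = b) := by
    intro y
    have := Set.ext_iff.mp hfix y
    simpa [FixSet, Set.mem_insert_iff] using this
  have ha : f a = a := ((hmemfix a).mpr (Or.inl rfl)).1
  have hb : f b = b := ((hmemfix b).mpr (Or.inr rfl)).1
  have hnofix : ∀ y ∈ Ioo a b, f y ≠ y := by
    intro y hy hfy
    rcases (hmemfix y).mp ⟨hfy, Ioo_subset_Icc_self hy⟩ with h | h <;>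
      simp [h, lt_irrefl] at hy
  have hmapΛ : ∀ y ∈ Λ, f y ∈ Λ := fun y hy => hfΛ ▸ mem_image_of_mem _ hy
  have hcont : Continuous f := f.toHomeomorph.continuous
  set s : ℕ → ℝ := fun n => f^[n] x with hs
  have hsucc : ∀ n, s (n+1) = f (s n) := fun n => Function.iterate_succ_apply' f n x
  rcases lt_or_gt_of_ne (hnofix x hx) with hlt | hgt
  · -- f x < x : iterates decrease to a
    have hsign : ∀ y ∈ Ioo a b, f y < y := by
      intro y hy
      -- use sign_const on the dual: direct argument instead
      by_contra hle
      push_neg at hle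
      have : y < f y := lt_of_le_of_ne hle (fun h => hnofix y hy h.symm)
      have := sign_const f a b hnofix y hy this x hx
      exact absurd this (not_lt.mpr hlt.le)
    have hinv : ∀ n, s n ∈ Ioo a b ∧ s n ∈ Λ := by
      intro n
      induction n with
      | zero => exact ⟨hx, hxΛ⟩
      | succ n ih =>
        have h1 : f (s n) < s n := hsign _ ih.1
        have h2 : a < f (s n) := by
          have := f.strictMono ih.1.1
          rwa [ha] at this
        exact ⟨by rw [hsucc]; exact ⟨h2, lt_trans h1 ih.1.2⟩, by rw [hsucc]; exact hmapΛ _ ih.2⟩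
    have hanti : StrictAnti s := strictAnti_nat_of_succ_lt (fun n => by
      rw [hsucc]; exact hsign _ (hinv n).1)
    have hbdd : BddBelow (range s) := ⟨a, by rintro _ ⟨n, rfl⟩; exact (hinv n).1.1.le⟩
    have htend : Filter.Tendsto s Filter.atTop (nhds (⨅ n, s n)) :=
      tendsto_atTop_ciInf hanti.antitone hbdd
    set L := ⨅ n, s n with hL
    have hLΛ : L ∈ Λ := hclosed.mem_of_tendsto htend (Filter.Eventually.of_forall fun n => (hinv n).2)
    have hfL : f L = L := by
      have h1 : Filter.Tendsto (fun n => f (s n)) Filter.atTop (nhds (f L)) :=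
        (hcont.tendsto L).comp htend
      have h2 : Filter.Tendsto (fun n => s (n+1)) Filter.atTop (nhds L) :=
        htend.comp (Filter.tendsto_add_atTop_nat 1)
      have : (fun n => f (s n)) = fun n => s (n+1) := funext fun n => (hsucc n).symm
      rw [this] at h1
      exact tendsto_nhds_unique h1 h2
    have hLa : a ≤ L := le_ciInf fun n => (hinv n).1.1.le
    have hLx : L ≤ x := ciInf_le hbdd 0
    have : L = a ∨ L = b := (hmemfix L).mp ⟨hfL, hLa, le_trans hLx hx.2.le⟩
    rcases this with h | h
    · exact Or.inl (h ▸ hLΛ)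
    · exact absurd h (ne_of_lt (lt_of_le_of_lt hLx hx.2))
  · -- x < f x : iterates increase to b
    have hsign := sign_const f a b hnofix x hx hgt
    have hinv : ∀ n, s n ∈ Ioo a b ∧ s n ∈ Λ := by
      intro n
      induction n with
      | zero => exact ⟨hx, hxΛ⟩
      | succ n ih =>
        have h1 : s n < f (s n) := hsign _ ih.1
        have h2 : f (s n) < b := by
          have := f.strictMono ih.1.2
          rwa [hb] at this
        exact ⟨by rw [hsucc]; exact ⟨lt_trans ih.1.1 h1, h2⟩, by rw [hsucc]; exact hmapΛ _ ih.2⟩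
    have hmono : StrictMono s := strictMono_nat_of_lt_succ (fun n => by
      rw [hsucc]; exact hsign _ (hinv n).1)
    have hbdd : BddAbove (range s) := ⟨b, by rintro _ ⟨n, rfl⟩; exact (hinv n).1.2.le⟩
    have htend : Filter.Tendsto s Filter.atTop (nhds (⨆ n, s n)) :=
      tendsto_atTop_ciSup hmono.monotone hbdd
    set L := ⨆ n, s n with hL
    have hLΛ : L ∈ Λ := hclosed.mem_of_tendsto htend (Filter.Eventually.of_forall fun n => (hinv n).2)
    have hfL : f L = L := by
      have h1 : Filter.Tendsto (fun n => f (s n)) Filter.atTop (nhds (f L)) :=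
        (hcont.tendsto L).comp htend
      have h2 : Filter.Tendsto (fun n => s (n+1)) Filter.atTop (nhds L) :=
        htend.comp (Filter.tendsto_add_atTop_nat 1)
      have : (fun n => f (s n)) = fun n => s (n+1) := funext fun n => (hsucc n).symm
      rw [this] at h1
      exact tendsto_nhds_unique h1 h2
    have hLb : L ≤ b := ciSup_le fun n => (hinv n).1.2.le
    have hLx : x ≤ L := le_ciSup hbdd 0
    have : L = a ∨ L = b := (hmemfix L).mp ⟨hfL, le_trans hx.1.le hLx, hLb⟩
    rcases this with h | h
    · exact absurd h (ne_of_gt (lt_of_lt_of_le hx.1 hLx))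
    · exact Or.inr (h ▸ hLΛ)

lemma cross_of_endpoint (f g : HomeoR) (a b : ℝ) (hab : a < b)
    (hfix : FixSet f ∩ Icc a b = {a, b})
    (e : ℝ) (he : e = a ∨ e = b) (hg : g e ∈ Ioo a b) : CrossedAt f g := by
  refine ⟨(a:EReal), (b:EReal), by exact_mod_cast hab, ?_, ⟨e, ?_, ?_, ?_⟩⟩
  · ext y
    have := Set.ext_iff.mp hfix y
    simp only [mem_inter_iff, mem_setOf_eq, EReal.coe_le_coe_iff, EReal.coe_eq_coe_iff,
      FixSet, Set.mem_insert_iff, Set.mem_singleton_iff, Set.mem_Icc] at this ⊢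
    tauto
  · rcases he with h | h <;> simp [h]
  · exact_mod_cast hg.1
  · exact_mod_cast hg.2

theorem minimal_no_tower (G : Subgroup HomeoR)
    (hnc : ∀ f ∈ G, ∀ g ∈ G, ¬ Crossed f g)
    (Λ : Set ℝ) (hΛ : MinimalSet G Λ) :
    ¬ ∃ (a b : ℕ → ℝ) (f : ℕ → HomeoR),
      (∀ i, f i ∈ G) ∧ (∀ i, a i < b i) ∧
      (∀ i, Icc (a i) (b i) ⊂ Icc (a (i+1)) (b (i+1))) ∧
      (∀ i, FixSet (f i) ∩ Icc (a i) (b i) = {a i, b i}) ∧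
      (⋃ i, Icc (a i) (b i)) = univ := by
  rintro ⟨a, b, f, hfG, hab, hssub, hfix, hcov⟩
  obtain ⟨⟨x, hxΛ⟩, hclosed, hinv, hmin⟩ := hΛ
  -- monotone intervals
  have hmono : ∀ i j, i ≤ j → Icc (a i) (b i) ⊆ Icc (a j) (b j) := by
    intro i j hij
    induction hij with
    | refl => rfl
    | step h ih => exact fun y hy => (hssub _).subset (ih hy)
  -- find j with x ∈ Ioo (a j) (b j)
  have hcov' : ∀ y : ℝ, ∃ i, y ∈ Icc (a i) (b i) := by
    intro y
    have : y ∈ ⋃ i, Icc (a i) (b i) := hcov ▸ mem_univ y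
    simpa using this
  obtain ⟨i1, h1⟩ := hcov' (x - 1)
  obtain ⟨i2, h2⟩ := hcov' (x + 1)
  set j := max i1 i2 with hj
  have h1' := hmono i1 j (le_max_left _ _) h1
  have h2' := hmono i2 j (le_max_right _ _) h2
  have hxoo : x ∈ Ioo (a j) (b j) := ⟨by linarith [h1'.1], by linarith [h2'.2]⟩
  -- endpoint in Λ
  obtain he | he := endpoint_mem Λ hclosed (f j) (hinv (f j) (hfG j)) (a j) (b j) x
      (hab j) (hfix j) hxoo hxΛ
  case' inl => set e := a j with hedef
  case' inr => set e := b j with hedef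
  all_goals {
    -- orbit closure of e equals Λ
    have heor : e = a j ∨ e = b j := by simp [hedef]
    set S : Set ℝ := {y | ∃ g ∈ G, (g : HomeoR) e = y} with hS
    have hSsub : S ⊆ Λ := by
      rintro _ ⟨g, hg, rfl⟩
      exact (hinv g hg) ▸ mem_image_of_mem _ he
    have hSne : S.Nonempty := ⟨e, 1, G.one_mem, rfl⟩
    have hSinv : ∀ g ∈ G, ⇑g '' S = S := by
      intro g hg
      ext y
      constructor
      · rintro ⟨_, ⟨h, hh, rfl⟩, rfl⟩
        exact ⟨g * h, G.mul_mem hg hh, rfl⟩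
      · rintro ⟨k, hk, rfl⟩
        refine ⟨(g⁻¹ * k) e, ⟨g⁻¹ * k, G.mul_mem (G.inv_mem hg) hk, rfl⟩, ?_⟩
        show (g * (g⁻¹ * k)) e = k e
        rw [← mul_assoc, mul_inv_cancel, one_mul]
    have hclS : closure S = Λ := by
      refine hmin (closure S) (hclosed.closure_subset_iff.mpr hSsub) (hSne.mono subset_closure)
        isClosed_closure (fun g hg => ?_)
      rw [show ⇑g '' closure S = closure (⇑g '' S) from g.toHomeomorph.image_closure S, hSinv g hg]
    -- x ∈ closure S, open Ioo hits S
    have hxcl : x ∈ closure S := hclS ▸ hxΛ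
    obtain ⟨y, hyIoo, g, hg, rfl⟩ := mem_closure_iff.mp hxcl (Ioo (a j) (b j)) isOpen_Ioo hxoo
    exact hnc (f j) (hfG j) g hg (Or.inl
      (cross_of_endpoint (f j) g (a j) (b j) (hab j) (hfix j) e heor hyIoo))
  }
end

section
/- Let G be a group acting on ℝ by orientation-preserving homeomorphisms, let Γ = {f ∈ G : Fix(f) ≠ ∅}, and suppose Γ is a normal subgroup of G with Fix(Γ) ≠ ∅ and Γ ≠ G. Consider the quotient action: collapsing the closure of each connected component of ℝ \ Fix(Γ) to a point yields a monotone quotient map φ. Then the induced action of G/Γ on the quotient space is free. -/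
/-
If `g ∈ G` has no fixed point we may assume `t < g t` for all `t`. Since `Γ` is normalised by `G`,
`F = Fix(Γ)` is a closed nonempty `g`-invariant set, hence unbounded above, so a gap `C` of `F`
whose closure contains `x` and `g x` is bounded above and its right endpoint `b` lies in `F`.
As `g x ≤ b`, the closure of `C` also contains `g⁻¹ b`, and applying `g`, the closure of the gap
`g C` contains `b` and `g b`. Since `φ` identifies `g⁻¹ b` with `b` and `b` with `g b`, it
identifies `g⁻¹ b` with `g b`; but no gap closure contains both, as `b ∈ F` lies strictly between.
-/

open Set MeasureTheory
open scoped NNReal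

def SameGapClosure {X : Type*} [TopologicalSpace X] (F : Set X) (x y : X) : Prop :=
  ∃ z ∈ Fᶜ, x ∈ closure (connectedComponentIn Fᶜ z) ∧
    y ∈ closure (connectedComponentIn Fᶜ z)

section Topology

variable {X : Type*} [TopologicalSpace X] {F : Set X} {x y : X}

theorem SameGapClosure.symm (h : SameGapClosure F x y) : SameGapClosure F y x :=
  let ⟨z, hz, hx, hy⟩ := h
  ⟨z, hz, hy, hx⟩

theorem SameGapClosure.image (e : X ≃ₜ X) (hF : e '' F = F) (h : SameGapClosure F x y) :
    SameGapClosure F (e x) (e y) := by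
  obtain ⟨z, hz, hx, hy⟩ := h
  have hFc : e '' Fᶜ = Fᶜ := by rw [image_compl_eq e.bijective, hF]
  have hgap : e '' closure (connectedComponentIn Fᶜ z) =
      closure (connectedComponentIn Fᶜ (e z)) := by
    rw [e.image_closure, e.image_connectedComponentIn hz, hFc]
  exact ⟨e z, hFc ▸ mem_image_of_mem e hz, hgap ▸ mem_image_of_mem e hx,
    hgap ▸ mem_image_of_mem e hy⟩

end Topology

section LinearOrder

variable {α : Type*} [LinearOrder α] [TopologicalSpace α] [OrderClosedTopology α]

theorem IsPreconnected.subset_Iio_or_subset_Ioi {s : Set α} (hs : IsPreconnected s) {p : α}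
    (hp : p ∉ s) : s ⊆ Iio p ∨ s ⊆ Ioi p := by
  by_contra! h
  obtain ⟨u, hu, hup⟩ := not_subset.1 h.1
  obtain ⟨v, hv, hvp⟩ := not_subset.1 h.2
  exact hp (hs.Icc_subset hv hu ⟨not_lt.1 hvp, not_lt.1 hup⟩)

theorem not_sameGapClosure_of_lt_of_lt {F : Set α} {x y p : α} (hp : p ∈ F) (hxp : x < p)
    (hpy : p < y) : ¬ SameGapClosure F x y := by
  rintro ⟨z, -, hx, hy⟩
  have hpC : p ∉ connectedComponentIn Fᶜ z := fun h => connectedComponentIn_subset _ _ h hp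
  rcases isPreconnected_connectedComponentIn.subset_Iio_or_subset_Ioi hpC with hC | hC
  · exact (closure_minimal (hC.trans Iio_subset_Iic_self) isClosed_Iic hy).not_gt hpy
  · exact (closure_minimal (hC.trans Ioi_subset_Ici_self) isClosed_Ici hx).not_gt hxp

end LinearOrder

theorem not_bddAbove_of_mapsTo {α : Type*} [ConditionallyCompleteLinearOrder α]
    [TopologicalSpace α] [OrderTopology α] {F : Set α} {g : α → α} (hFc : IsClosed F)
    (hne : F.Nonempty) (hF : MapsTo g F F) (hg : ∀ t ∈ F, t < g t) : ¬ BddAbove F := by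
  intro hbdd
  have hmem := hFc.csSup_mem hne hbdd
  exact (hg _ hmem).not_ge (le_csSup hbdd (hF hmem))

theorem forall_lt_or_forall_gt_of_ne {f : ℝ → ℝ} (hf : Continuous f) (h : ∀ t, f t ≠ t) :
    (∀ t, t < f t) ∨ (∀ t, f t < t) := by
  by_contra! hmix
  obtain ⟨⟨s, hs⟩, ⟨t, ht⟩⟩ := hmix
  obtain ⟨u, hu⟩ := intermediate_value_univ s t (hf.sub continuous_id)
    (show (0 : ℝ) ∈ Icc (f s - s) (f t - t) from ⟨by linarith, by linarith⟩)
  exact h u (sub_eq_zero.1 hu)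

theorem csSup_closure_connectedComponentIn_mem {F : Set ℝ} (hFc : IsClosed F) {z : ℝ}
    (hz : z ∈ Fᶜ) (hbdd : BddAbove (closure (connectedComponentIn Fᶜ z))) :
    sSup (closure (connectedComponentIn Fᶜ z)) ∈ F := by
  set C := connectedComponentIn Fᶜ z
  set b := sSup (closure C)
  have hbC : b ∈ closure C :=
    isClosed_closure.csSup_mem ⟨z, subset_closure (mem_connectedComponentIn hz)⟩ hbdd
  by_contra hbF
  have hb : b ∈ C := by
    obtain ⟨w, hwb, hwC⟩ := mem_closure_iff.1 hbC _ hFc.isOpen_compl.connectedComponentIn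
      (mem_connectedComponentIn hbF)
    have hCb : C = connectedComponentIn Fᶜ b :=
      (connectedComponentIn_eq hwC).trans (connectedComponentIn_eq hwb).symm
    exact hCb ▸ mem_connectedComponentIn hbF
  obtain ⟨c, hbc, hcC⟩ := exists_Ico_subset_of_mem_nhds
    (hFc.isOpen_compl.connectedComponentIn.mem_nhds hb) (exists_gt b)
  obtain ⟨d, hbd, hdc⟩ := exists_between hbc
  exact (le_csSup hbdd (subset_closure (hcC ⟨hbd.le, hdc⟩))).not_gt hbd

theorem exists_mem_sameGapClosure_symm_apply {F : Set ℝ} (hFc : IsClosed F)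
    (hunb : ¬ BddAbove F) {g : ℝ ≃o ℝ} (hg : ∀ t, t ≤ g t) {x : ℝ}
    (h : SameGapClosure F x (g x)) : ∃ b ∈ F, SameGapClosure F (g.symm b) b := by
  obtain ⟨z, hz, hx, hgx⟩ := h
  set C := connectedComponentIn Fᶜ z
  obtain ⟨p, hpF, hzp⟩ := not_bddAbove_iff.1 hunb z
  have hCp : C ⊆ Iio p :=
    (isPreconnected_connectedComponentIn.subset_Iio_or_subset_Ioi
      fun hp => (connectedComponentIn_subset _ _ hp : p ∈ Fᶜ) hpF).resolve_right
      fun hC => (hC (mem_connectedComponentIn hz)).not_gt hzp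
  have hbdd : BddAbove (closure C) :=
    ⟨p, closure_minimal (hCp.trans Iio_subset_Iic_self) isClosed_Iic⟩
  have hbC : sSup (closure C) ∈ closure C := isClosed_closure.csSup_mem ⟨x, hx⟩ hbdd
  have haC : g.symm (sSup (closure C)) ∈ closure C :=
    isPreconnected_connectedComponentIn.closure.Icc_subset hx hbC
      ⟨g.le_symm_apply.2 (le_csSup hbdd hgx), by simpa using hg (g.symm (sSup (closure C)))⟩
  exact ⟨_, csSup_closure_connectedComponentIn_mem hFc hz hbdd, z, hz, haC, hbC⟩

theorem not_sameGapClosure_apply {F : Set ℝ} (hFc : IsClosed F) (hne : F.Nonempty)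
    {g : ℝ ≃o ℝ} (hFg : g '' F = F) (hg : ∀ t, t < g t)
    (htrans : ∀ x y w, SameGapClosure F x y → SameGapClosure F y w →
      x = w ∨ SameGapClosure F x w) (x : ℝ) :
    ¬ SameGapClosure F x (g x) := by
  intro h
  have hunb : ¬ BddAbove F :=
    not_bddAbove_of_mapsTo hFc hne (fun t ht => hFg ▸ mem_image_of_mem g ht) fun t _ => hg t
  obtain ⟨b, hbF, hgap⟩ := exists_mem_sameGapClosure_symm_apply hFc hunb (fun t => (hg t).le) h
  have hgap' : SameGapClosure F b (g b) := by
    simpa using hgap.image g.toHomeomorph (by simpa using hFg)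
  have hlt : g.symm b < b := by simpa using hg (g.symm b)
  rcases htrans _ _ _ hgap hgap' with heq | hgap''
  · exact (hlt.trans (hg b)).ne heq
  · exact not_sameGapClosure_of_lt_of_lt hbF hlt (hg b) hgap''

theorem isClosed_iInter_fixSet (Γ : Set HomeoR) : IsClosed (⋂ f ∈ Γ, FixSet f) :=
  isClosed_biInter fun f _ => isClosed_eq f.continuous continuous_id

theorem mapsTo_iInter_fixSet {Γ : Set HomeoR} {g : HomeoR}
    (hΓ : ∀ f ∈ Γ, g⁻¹ * f * g ∈ Γ) :
    MapsTo g (⋂ f ∈ Γ, FixSet f) (⋂ f ∈ Γ, FixSet f) := by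
  intro t ht
  simp only [mem_iInter₂] at ht ⊢
  intro f hf
  exact g.symm_apply_eq.1 (ht _ (hΓ f hf))

theorem image_iInter_fixSet_eq {G : Subgroup HomeoR} {Γ : Set HomeoR}
    (hnormal : ∀ g ∈ G, ∀ f ∈ Γ, g * f * g⁻¹ ∈ Γ) {g : HomeoR} (hg : g ∈ G) :
    g '' (⋂ f ∈ Γ, FixSet f) = ⋂ f ∈ Γ, FixSet f := by
  have hmaps (h : HomeoR) (hh : h ∈ G) :
      MapsTo h (⋂ f ∈ Γ, FixSet f) (⋂ f ∈ Γ, FixSet f) :=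
    mapsTo_iInter_fixSet fun f hf => by simpa using hnormal _ (inv_mem hh) f hf
  exact (hmaps g hg).image_subset.antisymm fun t ht =>
    ⟨g⁻¹ t, hmaps _ (inv_mem hg) ht, by simp⟩

theorem quotient_action_free_general (G : Subgroup HomeoR)
    (Γ : Set HomeoR)
    (hnormal : ∀ g ∈ G, ∀ f ∈ Γ, g * f * g⁻¹ ∈ Γ)
    (F : Set ℝ) (hF : F = ⋂ f ∈ Γ, FixSet f)
    (hFne : F.Nonempty)
    (φ : ℝ → ℝ)
    (hfib : ∀ x y : ℝ, φ x = φ y ↔ (x = y ∨ ∃ z ∈ Fᶜ,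
      x ∈ closure (connectedComponentIn Fᶜ z) ∧
      y ∈ closure (connectedComponentIn Fᶜ z))) :
    ∀ g ∈ G, (∃ x : ℝ, φ (g x) = φ x) → (FixSet g).Nonempty := by
  rintro g hg ⟨x, hx⟩
  have hFc : IsClosed F := hF ▸ isClosed_iInter_fixSet Γ
  have hinv (h : HomeoR) (hh : h ∈ G) : h '' F = F := hF ▸ image_iInter_fixSet_eq hnormal hh
  have htrans (x y w : ℝ) (hxy : SameGapClosure F x y) (hyw : SameGapClosure F y w) :
      x = w ∨ SameGapClosure F x w :=
    (hfib x w).1 (((hfib x y).2 (.inr hxy)).trans ((hfib y w).2 (.inr hyw)))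
  rcases (hfib (g x) x).1 hx with hfix | (hgap : SameGapClosure F (g x) x)
  · exact ⟨x, hfix⟩
  by_contra hfree
  rcases forall_lt_or_forall_gt_of_ne g.continuous fun t ht => hfree ⟨t, ht⟩ with hlt | hgt
  · exact not_sameGapClosure_apply hFc hFne (hinv g hg) hlt htrans x hgap.symm
  · exact not_sameGapClosure_apply hFc hFne (hinv _ (inv_mem hg))
      (fun t => by simpa using hgt (g⁻¹ t)) htrans (g x) (by simpa using hgap)

theorem quotient_action_free (G : Subgroup HomeoR)
    (Γ : Set HomeoR) (hΓ : Γ = {f : HomeoR | f ∈ G ∧ (FixSet f).Nonempty})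
    (hnormal : ∀ g ∈ G, ∀ f ∈ Γ, g * f * g⁻¹ ∈ Γ)
    (F : Set ℝ) (hF : F = ⋂ f ∈ Γ, FixSet f)
    (hFne : F.Nonempty) (hproper : Γ ≠ {f : HomeoR | f ∈ G})
    (φ : ℝ → ℝ) (hmono : Monotone φ) (hcont : Continuous φ)
    (hsurj : Function.Surjective φ)
    (hfib : ∀ x y : ℝ, φ x = φ y ↔ (x = y ∨ ∃ z ∈ Fᶜ,
      x ∈ closure (connectedComponentIn Fᶜ z) ∧
      y ∈ closure (connectedComponentIn Fᶜ z))) :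
    ∀ g ∈ G, (∃ x : ℝ, φ (g x) = φ x) → (FixSet g).Nonempty :=
  quotient_action_free_general G Γ hnormal F hF hFne φ hfib
end

section
/- For any two closed bounded intervals I = [a,b] and J = [c,d] with a < b and c < d, there exists a C¹ orientation-preserving diffeomorphism φ_{I,J}: I → J with φ_{I,J}(a) = c, φ_{I,J}(b) = d, φ_{I,J}'(a) = φ_{I,J}'(b) = 1, and such that for every ε > 0 there is δ > 0 with |φ_{I,J}'(x) − 1| < ε for all x ∈ I whenever |((d−c)/(b−a)) − 1| < δ, and moreover the family satisfies the equivariance φ_{I,K} = φ_{J,K} ∘ φ_{I,J} for any third interval K. -/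
/-!
Transport `[a, b]` affinely onto `[-π/2, π/2]` and use there the maps
`ψ_r θ = arctan (r * tan θ)`, `r > 0`. Being conjugate by `tan` to multiplication by `r`, they
form a one-parameter group: `ψ_s ∘ ψ_r = ψ_{s r}`. Taking `r = |J| / |I|` makes `φ_{I,J}`
equivariant, because length ratios multiply. At the angle `θ` the derivative of `φ_{I,J}` is
`r² / (cos² θ + r² sin² θ)`: it equals `1` at `θ = ±π/2` and is within `|r² - 1|` of `1`.
`ψ_r` itself is extended smoothly past `±π/2`, which gives the `C¹` regularity at the endpoints.
-/

open Set MeasureTheory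
open scoped NNReal

open Real

/-- A smooth extension to `ℝ` of `θ ↦ arctan (r * tan θ)` on `(-π/2, π/2)`
(`scaleTan_eq_arctan`): there `tan (arctan (r * tan θ) - θ) = (r - 1) tan θ / (1 + r tan² θ)`. -/
noncomputable def scaleTan (r θ : ℝ) : ℝ :=
  θ + arctan ((r - 1) * sin θ * cos θ / (cos θ ^ 2 + r * sin θ ^ 2))

section scaleTan

variable {r s θ : ℝ}

lemma cos_sq_add_mul_sin_sq_pos (hr : 0 < r) (θ : ℝ) : 0 < cos θ ^ 2 + r * sin θ ^ 2 := by
  rcases eq_or_ne (sin θ) 0 with h | h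
  · rw [cos_sq', h]; norm_num
  · positivity

lemma scaleTan_neg_pi_div_two (r : ℝ) : scaleTan r (-(π / 2)) = -(π / 2) := by
  simp [scaleTan]

lemma scaleTan_pi_div_two (r : ℝ) : scaleTan r (π / 2) = π / 2 := by
  simp [scaleTan]

lemma scaleTan_eq_arctan (hr : 0 < r) (hθ : θ ∈ Ioo (-(π / 2)) (π / 2)) :
    scaleTan r θ = arctan (r * tan θ) := by
  have hc : 0 < cos θ := cos_pos_of_mem_Ioo hθ
  have hD : 0 < 1 + r * tan θ ^ 2 := by positivity
  have hquot : (r - 1) * sin θ * cos θ / (cos θ ^ 2 + r * sin θ ^ 2)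
      = (r - 1) * tan θ / (1 + r * tan θ ^ 2) := by
    rw [tan_eq_sin_div_cos]; field_simp
  have hnum : tan θ + (r - 1) * tan θ / (1 + r * tan θ ^ 2)
      = r * tan θ * (1 + tan θ ^ 2) / (1 + r * tan θ ^ 2) := by
    field_simp; ring
  have hden : 1 - tan θ * ((r - 1) * tan θ / (1 + r * tan θ ^ 2))
      = (1 + tan θ ^ 2) / (1 + r * tan θ ^ 2) := by
    field_simp; ring
  rw [scaleTan, hquot, ← arctan_tan hθ.1 hθ.2, arctan_add, tan_arctan, hnum, hden]
  · field_simp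
  · rw [tan_arctan, mul_div_assoc', div_lt_one hD]; nlinarith [sq_nonneg (tan θ)]

lemma scaleTan_scaleTan (hr : 0 < r) (hs : 0 < s) (hθ : θ ∈ Icc (-(π / 2)) (π / 2)) :
    scaleTan s (scaleTan r θ) = scaleTan (s * r) θ := by
  rcases hθ.1.eq_or_lt with rfl | hlo
  · simp only [scaleTan_neg_pi_div_two]
  rcases hθ.2.eq_or_lt with rfl | hhi
  · simp only [scaleTan_pi_div_two]
  have hθ' : θ ∈ Ioo (-(π / 2)) (π / 2) := ⟨hlo, hhi⟩
  rw [scaleTan_eq_arctan hr hθ',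
    scaleTan_eq_arctan hs ⟨neg_pi_div_two_lt_arctan _, arctan_lt_pi_div_two _⟩, tan_arctan,
    ← mul_assoc, scaleTan_eq_arctan (mul_pos hs hr) hθ']

lemma hasDerivAt_scaleTan (hr : 0 < r) (θ : ℝ) :
    HasDerivAt (scaleTan r) (r / (cos θ ^ 2 + r ^ 2 * sin θ ^ 2)) θ := by
  have hN : HasDerivAt (fun y => (r - 1) * sin y * cos y)
      ((r - 1) * (cos θ ^ 2 - sin θ ^ 2)) θ := by
    refine (((hasDerivAt_sin θ).const_mul (r - 1)).fun_mul (hasDerivAt_cos θ)).congr_deriv ?_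
    ring
  have hD : HasDerivAt (fun y => cos y ^ 2 + r * sin y ^ 2)
      (2 * (r - 1) * sin θ * cos θ) θ := by
    refine (((hasDerivAt_cos θ).fun_pow 2).fun_add
      (((hasDerivAt_sin θ).fun_pow 2).const_mul r)).congr_deriv ?_
    push_cast; ring
  have hD₀ := cos_sq_add_mul_sin_sq_pos hr θ
  have hD₁ := cos_sq_add_mul_sin_sq_pos (pow_pos hr 2) θ
  refine ((hasDerivAt_id' θ).add ((hN.fun_div hD hD₀.ne').arctan)).congr_deriv ?_
  calc _ = r * (sin θ ^ 2 + cos θ ^ 2) / (cos θ ^ 2 + r ^ 2 * sin θ ^ 2) := by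
        field_simp; ring
    _ = _ := by rw [sin_sq_add_cos_sq, mul_one]

lemma contDiff_scaleTan (hr : 0 < r) {n : WithTop ℕ∞} : ContDiff ℝ n (scaleTan r) :=
  contDiff_id.add <| contDiff_arctan.comp <|
    ContDiff.div (by fun_prop) (by fun_prop) fun θ => (cos_sq_add_mul_sin_sq_pos hr θ).ne'

lemma abs_sq_div_cos_sq_add_sq_mul_sin_sq_sub_one_le (hr : 0 < r) (θ : ℝ) :
    |r ^ 2 / (cos θ ^ 2 + r ^ 2 * sin θ ^ 2) - 1| ≤ |r ^ 2 - 1| := by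
  have hD := cos_sq_add_mul_sin_sq_pos (pow_pos hr 2) θ
  have hsub : r ^ 2 / (cos θ ^ 2 + r ^ 2 * sin θ ^ 2) - 1
      = (r ^ 2 - 1) * (cos θ ^ 2 / (cos θ ^ 2 + r ^ 2 * sin θ ^ 2)) := by
    field_simp; linear_combination (-r ^ 2) * sin_sq_add_cos_sq θ
  rw [hsub, abs_mul, abs_of_nonneg (by positivity : 0 ≤ cos θ ^ 2 / _)]
  refine mul_le_of_le_one_right (abs_nonneg _) ((div_le_one hD).2 ?_)
  nlinarith [sq_nonneg (r * sin θ)]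

end scaleTan

noncomputable def toAngle (a b x : ℝ) : ℝ := π * (x - (a + b) / 2) / (b - a)

noncomputable def ofAngle (a b θ : ℝ) : ℝ := (a + b) / 2 + (b - a) / π * θ

section angle

variable {a b x : ℝ}

lemma toAngle_ofAngle (h : a ≠ b) (θ : ℝ) : toAngle a b (ofAngle a b θ) = θ := by
  have : b - a ≠ 0 := sub_ne_zero.2 h.symm
  unfold toAngle ofAngle
  field_simp
  ring

lemma toAngle_left (h : a ≠ b) : toAngle a b a = -(π / 2) := by
  have : b - a ≠ 0 := sub_ne_zero.2 h.symm
  unfold toAngle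
  field_simp
  ring

lemma toAngle_right (h : a ≠ b) : toAngle a b b = π / 2 := by
  have : b - a ≠ 0 := sub_ne_zero.2 h.symm
  unfold toAngle
  field_simp
  ring

lemma ofAngle_neg_pi_div_two : ofAngle a b (-(π / 2)) = a := by
  unfold ofAngle
  field_simp
  ring

lemma ofAngle_pi_div_two : ofAngle a b (π / 2) = b := by
  unfold ofAngle
  field_simp
  ring

lemma toAngle_mem_Icc (hab : a < b) (hx : x ∈ Icc a b) :
    toAngle a b x ∈ Icc (-(π / 2)) (π / 2) := by
  have hba : 0 < b - a := sub_pos.2 hab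
  rw [← toAngle_left hab.ne, ← toAngle_right hab.ne]
  constructor <;> unfold toAngle <;> gcongr <;> [exact hx.1; exact hx.2]

lemma hasDerivAt_toAngle (x : ℝ) : HasDerivAt (toAngle a b) (π / (b - a)) x :=
  (((hasDerivAt_id' x).sub_const ((a + b) / 2)).const_mul π |>.div_const (b - a)).congr_deriv
    (by rw [mul_one])

lemma hasDerivAt_ofAngle (θ : ℝ) : HasDerivAt (ofAngle a b) ((b - a) / π) θ :=
  ((hasDerivAt_id' θ).const_mul ((b - a) / π) |>.const_add ((a + b) / 2)).congr_deriv (mul_one _)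

lemma contDiff_toAngle {n : WithTop ℕ∞} : ContDiff ℝ n (toAngle a b) := by
  unfold toAngle; fun_prop

lemma contDiff_ofAngle {n : WithTop ℕ∞} : ContDiff ℝ n (ofAngle a b) := by
  unfold ofAngle; fun_prop

end angle

noncomputable def yoccozMap (a b c d : ℝ) : ℝ → ℝ :=
  ofAngle c d ∘ scaleTan ((d - c) / (b - a)) ∘ toAngle a b

section yoccozMap

variable {a b c d e k x : ℝ}

lemma yoccozMap_left (hab : a < b) : yoccozMap a b c d a = c := by
  simp only [yoccozMap, Function.comp_apply, toAngle_left hab.ne, scaleTan_neg_pi_div_two,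
    ofAngle_neg_pi_div_two]

lemma yoccozMap_right (hab : a < b) : yoccozMap a b c d b = d := by
  simp only [yoccozMap, Function.comp_apply, toAngle_right hab.ne, scaleTan_pi_div_two,
    ofAngle_pi_div_two]

lemma contDiff_yoccozMap (hab : a < b) (hcd : c < d) {n : WithTop ℕ∞} :
    ContDiff ℝ n (yoccozMap a b c d) :=
  contDiff_ofAngle.comp ((contDiff_scaleTan (div_pos (sub_pos.2 hcd) (sub_pos.2 hab))).comp
    contDiff_toAngle)

lemma hasDerivAt_yoccozMap (hab : a < b) (hcd : c < d) (x : ℝ) :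
    HasDerivAt (yoccozMap a b c d)
      (((d - c) / (b - a)) ^ 2 / (cos (toAngle a b x) ^ 2
        + ((d - c) / (b - a)) ^ 2 * sin (toAngle a b x) ^ 2)) x := by
  have hr : 0 < (d - c) / (b - a) := div_pos (sub_pos.2 hcd) (sub_pos.2 hab)
  refine ((hasDerivAt_ofAngle _).comp x ((hasDerivAt_scaleTan hr _).comp x
    (hasDerivAt_toAngle x))).congr_deriv ?_
  field_simp

lemma derivWithin_yoccozMap (hab : a < b) (hcd : c < d) (hx : x ∈ Icc a b) :
    derivWithin (yoccozMap a b c d) (Icc a b) x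
      = ((d - c) / (b - a)) ^ 2 / (cos (toAngle a b x) ^ 2
        + ((d - c) / (b - a)) ^ 2 * sin (toAngle a b x) ^ 2) :=
  (hasDerivAt_yoccozMap hab hcd x).hasDerivWithinAt.derivWithin (uniqueDiffOn_Icc hab x hx)

lemma derivWithin_yoccozMap_pos (hab : a < b) (hcd : c < d) (hx : x ∈ Icc a b) :
    0 < derivWithin (yoccozMap a b c d) (Icc a b) x := by
  have hr : 0 < ((d - c) / (b - a)) ^ 2 := pow_pos (div_pos (sub_pos.2 hcd) (sub_pos.2 hab)) 2
  rw [derivWithin_yoccozMap hab hcd hx]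
  exact div_pos hr (cos_sq_add_mul_sin_sq_pos hr _)

lemma derivWithin_yoccozMap_left (hab : a < b) (hcd : c < d) :
    derivWithin (yoccozMap a b c d) (Icc a b) a = 1 := by
  have hr : (d - c) / (b - a) ≠ 0 := (div_pos (sub_pos.2 hcd) (sub_pos.2 hab)).ne'
  simp [derivWithin_yoccozMap hab hcd (left_mem_Icc.2 hab.le), toAngle_left hab.ne, hr]

lemma derivWithin_yoccozMap_right (hab : a < b) (hcd : c < d) :
    derivWithin (yoccozMap a b c d) (Icc a b) b = 1 := by
  have hr : (d - c) / (b - a) ≠ 0 := (div_pos (sub_pos.2 hcd) (sub_pos.2 hab)).ne'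
  simp [derivWithin_yoccozMap hab hcd (right_mem_Icc.2 hab.le), toAngle_right hab.ne, hr]

lemma abs_derivWithin_yoccozMap_sub_one_le (hab : a < b) (hcd : c < d) (hx : x ∈ Icc a b) :
    |derivWithin (yoccozMap a b c d) (Icc a b) x - 1| ≤ |((d - c) / (b - a)) ^ 2 - 1| := by
  rw [derivWithin_yoccozMap hab hcd hx]
  exact abs_sq_div_cos_sq_add_sq_mul_sin_sq_sub_one_le (div_pos (sub_pos.2 hcd) (sub_pos.2 hab)) _

lemma strictMono_yoccozMap (hab : a < b) (hcd : c < d) : StrictMono (yoccozMap a b c d) := by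
  have hr : 0 < ((d - c) / (b - a)) ^ 2 := pow_pos (div_pos (sub_pos.2 hcd) (sub_pos.2 hab)) 2
  refine strictMono_of_deriv_pos fun x => ?_
  rw [(hasDerivAt_yoccozMap hab hcd x).deriv]
  exact div_pos hr (cos_sq_add_mul_sin_sq_pos hr _)

lemma yoccozMap_image_Icc (hab : a < b) (hcd : c < d) :
    yoccozMap a b c d '' Icc a b = Icc c d := by
  rw [(contDiff_yoccozMap hab hcd (n := 0)).continuous.continuousOn.image_Icc_of_monotoneOn
    hab.le ((strictMono_yoccozMap hab hcd).monotone.monotoneOn _), yoccozMap_left hab,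
    yoccozMap_right hab]

lemma yoccozMap_yoccozMap (hab : a < b) (hcd : c < d) (hek : e < k) (hx : x ∈ Icc a b) :
    yoccozMap c d e k (yoccozMap a b c d x) = yoccozMap a b e k x := by
  have hr : 0 < (d - c) / (b - a) := div_pos (sub_pos.2 hcd) (sub_pos.2 hab)
  have hs : 0 < (k - e) / (d - c) := div_pos (sub_pos.2 hek) (sub_pos.2 hcd)
  simp only [yoccozMap, Function.comp_apply]
  rw [toAngle_ofAngle hcd.ne, scaleTan_scaleTan hr hs (toAngle_mem_Icc hab hx),
    div_mul_div_cancel₀ (sub_pos.2 hcd).ne']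

end yoccozMap

theorem yoccoz_family : ∃ φ : ℝ → ℝ → ℝ → ℝ → (ℝ → ℝ),
    (∀ a b c d : ℝ, a < b → c < d →
      (φ a b c d a = c ∧ φ a b c d b = d ∧
       StrictMonoOn (φ a b c d) (Icc a b) ∧
       φ a b c d '' Icc a b = Icc c d ∧
       ContDiffOn ℝ 1 (φ a b c d) (Icc a b) ∧
       (∀ x ∈ Icc a b, 0 < derivWithin (φ a b c d) (Icc a b) x) ∧
       derivWithin (φ a b c d) (Icc a b) a = 1 ∧
       derivWithin (φ a b c d) (Icc a b) b = 1)) ∧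
    (∀ ε : ℝ, 0 < ε → ∃ δ : ℝ, 0 < δ ∧ ∀ a b c d : ℝ, a < b → c < d →
       |((d - c) / (b - a)) - 1| < δ →
       ∀ x ∈ Icc a b, |derivWithin (φ a b c d) (Icc a b) x - 1| < ε) ∧
    (∀ a b c d e k : ℝ, a < b → c < d → e < k →
       ∀ x ∈ Icc a b, φ a b e k x = φ c d e k (φ a b c d x)) := by
  refine ⟨yoccozMap, fun a b c d hab hcd => ⟨yoccozMap_left hab, yoccozMap_right hab,
      (strictMono_yoccozMap hab hcd).strictMonoOn _, yoccozMap_image_Icc hab hcd,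
      (contDiff_yoccozMap hab hcd).contDiffOn, fun x hx => derivWithin_yoccozMap_pos hab hcd hx,
      derivWithin_yoccozMap_left hab hcd, derivWithin_yoccozMap_right hab hcd⟩,
    fun ε hε => ?_, fun a b c d e k hab hcd hek x hx => (yoccozMap_yoccozMap hab hcd hek hx).symm⟩
  obtain ⟨δ, hδ, hsq⟩ :=
    Metric.continuousAt_iff.1 ((continuous_pow 2).continuousAt (x := (1 : ℝ))) ε hε
  refine ⟨δ, hδ, fun a b c d hab hcd hclose x hx =>
    (abs_derivWithin_yoccozMap_sub_one_le hab hcd hx).trans_lt ?_⟩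
  simpa [Real.dist_eq] using hsq (by rwa [Real.dist_eq])
end
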